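/- Let n ≥ 1 be an integer and let μ be a nonnegative Borel measure on B satisfying ∫_B (1−|w|²)^n dμ(w) < ∞. Then for every 0 < r < 1 and every ξ ∈ S: G_μ(rξ) ≥ ((n+1)/(4^{n+1} n²)) · λ(C(ξ, 1−r)) / (1−r)^n. -/

import Mathlib

open MeasureTheory Metric Set
open scoped ENNReal

noncomputable section

instance euclideanComplexMeasurableSpace {n : ℕ} :
    MeasurableSpace (EuclideanSpace ℂ (Fin n)) := borel _

instance euclideanComplexBorelSpace {n : ℕ} :
    BorelSpace (EuclideanSpace ℂ (Fin n)) := ⟨rfl⟩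

/-- The Hermitian inner product `⟨z,w⟩ = ∑ j, z j * conj (w j)` from the paper. -/
def hip {n : ℕ} (z w : EuclideanSpace ℂ (Fin n)) : ℂ :=
  ∑ j, z j * (starRingEnd ℂ) (w j)

/-- Orthogonal projection `P_w` onto the complex line spanned by `w`
(equal to `0` when `w = 0`). -/
def Pw {n : ℕ} (w z : EuclideanSpace ℂ (Fin n)) : EuclideanSpace ℂ (Fin n) :=
  ((hip z w) / ((‖w‖ : ℂ) ^ 2)) • w

/-- The involutive automorphism `φ_w` of the unit ball. -/
def phi {n : ℕ} (w z : EuclideanSpace ℂ (Fin n)) : EuclideanSpace ℂ (Fin n) :=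
  (1 - hip z w)⁻¹ • (w - Pw w z - ((Real.sqrt (1 - ‖w‖ ^ 2) : ℝ) : ℂ) • (z - Pw w z))

/-- The radial function `g(z) = ((n+1)/(2n)) ∫_{|z|}^1 (1-t²)^{n-1} t^{-2n+1} dt`. -/
def gfun (n : ℕ) (z : EuclideanSpace ℂ (Fin n)) : ℝ :=
  ((n + 1) / (2 * n)) * ∫ t in (‖z‖)..(1 : ℝ), (1 - t ^ 2) ^ (n - 1) * t ^ (-2 * (n : ℤ) + 1)

/-- Green's function for the invariant Laplacian: `G(z,w) = g(φ_w(z))`. -/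
def Gker {n : ℕ} (z w : EuclideanSpace ℂ (Fin n)) : ℝ := gfun n (phi w z)

/-- The invariant Green potential of `μ`, as an `ℝ≥0∞`-valued function. -/
def Gpot {n : ℕ} (μ : Measure (EuclideanSpace ℂ (Fin n)))
    (z : EuclideanSpace ℂ (Fin n)) : ℝ≥0∞ :=
  ∫⁻ w in ball (0 : EuclideanSpace ℂ (Fin n)) 1, ENNReal.ofReal (Gker z w) ∂μ

/-- Surface measure on the unit sphere of `ℂⁿ`, normalized so that `σ(S) = 1`. -/
def sigmaS (n : ℕ) : Measure (sphere (0 : EuclideanSpace ℂ (Fin n)) 1) :=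
  ((volume : Measure (EuclideanSpace ℂ (Fin n))).toSphere univ)⁻¹ •
    (volume : Measure (EuclideanSpace ℂ (Fin n))).toSphere

/-- The Korányi region `C(ξ,δ) = {z ∈ B : |1 - ⟨z,ξ⟩| < δ}`. -/
def Cset {n : ℕ} (ξ : EuclideanSpace ℂ (Fin n)) (δ : ℝ) : Set (EuclideanSpace ℂ (Fin n)) :=
  {z | z ∈ ball (0 : EuclideanSpace ℂ (Fin n)) 1 ∧ ‖1 - hip z ξ‖ < δ}

/-- The weighted measure `λ(E) = ∫_E (1-|w|)^n dμ(w)`. -/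
def lamRM {n : ℕ} (μ : Measure (EuclideanSpace ℂ (Fin n)))
    (E : Set (EuclideanSpace ℂ (Fin n))) : ℝ≥0∞ :=
  ∫⁻ w in E, ENNReal.ofReal ((1 - ‖w‖) ^ n) ∂μ

/-- The `p`-th mean `m_p(r, G_μ)` of the Green potential over the unit sphere. -/
def mpG {n : ℕ} (p : ℝ) (μ : Measure (EuclideanSpace ℂ (Fin n))) (r : ℝ) : ℝ≥0∞ :=
  (∫⁻ ξ, (Gpot μ (r • (ξ : EuclideanSpace ℂ (Fin n)))) ^ p ∂(sigmaS n)) ^ (1 / p)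

/-- The anisotropic ball `D(ξ,δ) = {η ∈ S : d(ξ,η) < δ}` on the unit sphere,
where `d(a,b) = |1 - ⟨a,b⟩|^{1/2}`. -/
def Dset {n : ℕ} (ξ : sphere (0 : EuclideanSpace ℂ (Fin n)) 1) (δ : ℝ) :
    Set (sphere (0 : EuclideanSpace ℂ (Fin n)) 1) :=
  {η | ‖1 - hip (η : EuclideanSpace ℂ (Fin n)) (ξ : EuclideanSpace ℂ (Fin n))‖ < δ ^ 2}

/-!
Write `z = rξ`. Since `G(z, w) = g(φ_w(z))`, it suffices to bound `g(φ_w(z))` below on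
`C(ξ, 1 - r)`. The identity `1 - |φ_w(z)|² = (1 - |z|²)(1 - |w|²) / |1 - ⟨z, w⟩|²` together with
`|1 - ⟨z, w⟩| < 2(1 - r)` there gives `1 - |φ_w(z)|² ≥ (1 - |w|) / (4(1 - r))`, and `t^{1-2n} ≥ t`
on `(0, 1]` gives `g(v) ≥ (n + 1)/(4n²) · (1 - |v|²)ⁿ`. Hence
`G(z, w) ≥ (n + 1)/(4^{n+1} n²) · (1 - |w|)ⁿ / (1 - r)ⁿ` on `C(ξ, 1 - r)`; integrate against `μ`.
-/

open scoped ComplexConjugate InnerProductSpace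

section PhiAlgebra

variable {n : ℕ} (w z : EuclideanSpace ℂ (Fin n))

lemma hip_eq_inner : hip z w = ⟪w, z⟫_ℂ := by
  simp [hip, PiLp.inner_apply]

lemma hip_smul_left (r : ℝ) : hip (r • z) w = r * hip z w := by
  simp [hip, Finset.mul_sum, Complex.real_smul, mul_assoc]

lemma hip_eq_conj_hip : hip z w = conj (hip w z) := by
  simp [hip, mul_comm]

lemma norm_hip_le : ‖hip z w‖ ≤ ‖z‖ * ‖w‖ := by
  rw [hip_eq_inner, mul_comm]
  exact norm_inner_le_norm w z

lemma continuous_hip_left : Continuous fun z : EuclideanSpace ℂ (Fin n) => hip z w := by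
  simp_rw [hip_eq_inner]
  exact continuous_const.inner continuous_id

lemma inner_sub_Pw_eq_zero : ⟪w, z - Pw w z⟫_ℂ = 0 := by
  rcases eq_or_ne w 0 with rfl | hw
  · simp
  have : (‖w‖ : ℂ) ^ 2 ≠ 0 := by simpa using hw
  rw [Pw, hip_eq_inner, inner_sub_right, inner_smul_right, inner_self_eq_norm_sq_to_K]
  simp [div_mul_cancel₀ _ this]

lemma norm_mul_norm_Pw : ‖w‖ * ‖Pw w z‖ = ‖hip z w‖ := by
  rcases eq_or_ne w 0 with rfl | hw
  · simp [hip]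
  have : ‖w‖ ≠ 0 := norm_ne_zero_iff.mpr hw
  rw [Pw, norm_smul, norm_div, norm_pow, Complex.norm_real, Real.norm_of_nonneg (norm_nonneg _)]
  field_simp

lemma inner_Pw_sub_eq_zero : ⟪Pw w z, z - Pw w z⟫_ℂ = 0 := by
  rw [show ⟪Pw w z, z - Pw w z⟫_ℂ = conj (hip z w / (‖w‖ : ℂ) ^ 2) * ⟪w, z - Pw w z⟫_ℂ from
    inner_smul_left _ _ _, inner_sub_Pw_eq_zero, mul_zero]

lemma norm_sub_Pw_sq_add : ‖w - Pw w z‖ ^ 2 + (1 - ‖w‖ ^ 2) * ‖z - Pw w z‖ ^ 2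
    = ‖1 - hip z w‖ ^ 2 - (1 - ‖z‖ ^ 2) * (1 - ‖w‖ ^ 2) := by
  have hq := inner_sub_Pw_eq_zero w z
  have hpyth : ‖z‖ ^ 2 = ‖Pw w z‖ ^ 2 + ‖z - Pw w z‖ ^ 2 := by
    simpa [sq] using norm_add_sq_eq_norm_sq_add_norm_sq_of_inner_eq_zero _ _ (inner_Pw_sub_eq_zero w z)
  have hwp : ‖w - Pw w z‖ ^ 2 = ‖w‖ ^ 2 - 2 * (hip z w).re + ‖Pw w z‖ ^ 2 := by
    rw [inner_sub_right, ← hip_eq_inner, sub_eq_zero] at hq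
    simpa [← hq] using @norm_sub_sq ℂ _ _ _ _ w (Pw w z)
  have ha : ‖1 - hip z w‖ ^ 2 = 1 - 2 * (hip z w).re + ‖hip z w‖ ^ 2 := by
    simpa using @norm_sub_sq ℂ ℂ _ _ _ 1 (hip z w)
  linear_combination hwp - ha - (1 - ‖w‖ ^ 2) * hpyth +
    (‖w‖ * ‖Pw w z‖ + ‖hip z w‖) * norm_mul_norm_Pw w z

lemma norm_phi_sq_mul (hw : ‖w‖ ≤ 1) (ha : hip z w ≠ 1) :
    ‖phi w z‖ ^ 2 * ‖1 - hip z w‖ ^ 2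
      = ‖w - Pw w z‖ ^ 2 + (1 - ‖w‖ ^ 2) * ‖z - Pw w z‖ ^ 2 := by
  set s : ℂ := ((Real.sqrt (1 - ‖w‖ ^ 2) : ℝ) : ℂ)
  have horth : ⟪w - Pw w z, s • (z - Pw w z)⟫_ℂ = 0 := by
    rw [inner_smul_right, inner_sub_left, inner_sub_Pw_eq_zero, inner_Pw_sub_eq_zero, sub_zero,
      mul_zero]
  have hs : ‖s‖ ^ 2 = 1 - ‖w‖ ^ 2 := by
    rw [Complex.norm_real, Real.norm_eq_abs, sq_abs, Real.sq_sqrt (by nlinarith [norm_nonneg w])]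
  have ha : ‖1 - hip z w‖ ≠ 0 := norm_ne_zero_iff.2 (sub_ne_zero.2 (Ne.symm ha))
  rw [phi, norm_smul, mul_pow, @norm_sub_sq ℂ, horth, norm_smul, mul_pow, hs, norm_inv]
  field_simp
  simp

lemma one_sub_norm_phi_sq_mul (hw : ‖w‖ ≤ 1) (ha : hip z w ≠ 1) :
    (1 - ‖phi w z‖ ^ 2) * ‖1 - hip z w‖ ^ 2 = (1 - ‖z‖ ^ 2) * (1 - ‖w‖ ^ 2) := by
  linear_combination -(norm_sub_Pw_sq_add w z) - norm_phi_sq_mul w z hw ha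

lemma phi_ne_zero (hw : ‖w‖ < 1) (ha : hip z w ≠ 1) (hzw : z ≠ w) : phi w z ≠ 0 := by
  intro h0
  have hsum := norm_phi_sq_mul w z hw.le ha
  rw [h0, norm_zero] at hsum
  have h1 : 0 < 1 - ‖w‖ ^ 2 := by nlinarith [norm_nonneg w]
  obtain ⟨hw', hz'⟩ := (add_eq_zero_iff_of_nonneg (sq_nonneg _)
    (mul_nonneg h1.le (sq_nonneg _))).1 (by simpa using hsum.symm)
  replace hz' := (mul_eq_zero.1 hz').resolve_left h1.ne'
  rw [sq_eq_zero_iff, norm_eq_zero, sub_eq_zero] at hw' hz'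
  exact hzw (hz'.trans hw'.symm)

end PhiAlgebra

section RadialGreen

variable {n : ℕ}

lemma integral_one_sub_sq_pow_mul_self (hn : n ≠ 0) (ρ : ℝ) :
    ∫ t in ρ..1, (1 - t ^ 2) ^ (n - 1) * t = (1 - ρ ^ 2) ^ n / (2 * n) := by
  have hderiv : ∀ t ∈ uIcc ρ 1, HasDerivAt (fun t : ℝ => -(1 - t ^ 2) ^ n / (2 * n))
      ((1 - t ^ 2) ^ (n - 1) * t) t := by
    intro t _
    have hsq : HasDerivAt (fun t : ℝ => 1 - t ^ 2) (-(2 * t)) t := by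
      simpa using (hasDerivAt_pow 2 t).const_sub 1
    refine ((hsq.fun_pow n).fun_neg.div_const (2 * (n : ℝ))).congr_deriv ?_
    field_simp
  have hcont : Continuous fun t : ℝ => (1 - t ^ 2) ^ (n - 1) * t := by fun_prop
  rw [intervalIntegral.integral_eq_sub_of_hasDerivAt hderiv (hcont.intervalIntegrable _ _)]
  simp [hn]
  ring

lemma div_le_integral_one_sub_sq_pow_mul_zpow (hn : n ≠ 0) {ρ : ℝ} (h0 : 0 < ρ) (h1 : ρ ≤ 1) :
    (1 - ρ ^ 2) ^ n / (2 * n)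
      ≤ ∫ t in ρ..1, (1 - t ^ 2) ^ (n - 1) * t ^ (-2 * (n : ℤ) + 1) := by
  rw [← integral_one_sub_sq_pow_mul_self hn]
  apply intervalIntegral.integral_mono_on h1
    ((by fun_prop : Continuous fun t : ℝ => (1 - t ^ 2) ^ (n - 1) * t).intervalIntegrable _ _)
  · refine ContinuousOn.intervalIntegrable fun t ht => ?_
    rw [uIcc_of_le h1] at ht
    have : t ≠ 0 ∨ 0 ≤ -2 * (n : ℤ) + 1 := Or.inl (h0.trans_le ht.1).ne'
    exact ContinuousAt.continuousWithinAt (by fun_prop (disch := assumption))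
  · intro t ht
    have ht0 : 0 < t := h0.trans_le ht.1
    have hpow : t ^ (1 : ℤ) ≤ t ^ (-2 * (n : ℤ) + 1) :=
      zpow_le_zpow_right_of_le_one₀ ht0 ht.2 (by omega)
    rw [zpow_one] at hpow
    exact mul_le_mul_of_nonneg_left hpow (pow_nonneg (by nlinarith [ht.2]) _)

/-- The integral defining `gfun n 0` diverges, so its value in Lean is junk: hence `0 < ‖v‖`. -/
lemma gfun_ge (hn : n ≠ 0) {v : EuclideanSpace ℂ (Fin n)} (h0 : 0 < ‖v‖) (h1 : ‖v‖ ≤ 1) :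
    ((n : ℝ) + 1) / (4 * n ^ 2) * (1 - ‖v‖ ^ 2) ^ n ≤ gfun n v := by
  have hn' : (n : ℝ) ≠ 0 := Nat.cast_ne_zero.2 hn
  calc ((n : ℝ) + 1) / (4 * n ^ 2) * (1 - ‖v‖ ^ 2) ^ n
      = ((n : ℝ) + 1) / (2 * n) * ((1 - ‖v‖ ^ 2) ^ n / (2 * n)) := by
        field_simp
        ring
    _ ≤ gfun n v := by
        rw [gfun]
        gcongr
        exact div_le_integral_one_sub_sq_pow_mul_zpow hn h0 h1

end RadialGreen

section KoranyiRegion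

variable {n : ℕ} {ξ w : EuclideanSpace ℂ (Fin n)} {r : ℝ}

lemma norm_one_sub_hip_smul_lt {δ : ℝ} (hξ : ‖ξ‖ ≤ 1) (hr : r ≤ 1) (hw : w ∈ Cset ξ δ) :
    ‖1 - hip (r • ξ) w‖ < δ + (1 - r) := by
  obtain ⟨hw1, hwδ⟩ := hw
  have hb : ‖hip w ξ‖ ≤ 1 :=
    (norm_hip_le ξ w).trans (mul_le_one₀ (mem_ball_zero_iff.1 hw1).le (norm_nonneg _) hξ)
  calc ‖1 - hip (r • ξ) w‖ = ‖(1 - hip w ξ) + (1 - r : ℝ) * hip w ξ‖ := by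
        rw [hip_smul_left, hip_eq_conj_hip ξ, ← Complex.norm_conj]
        simp only [map_sub, map_one, map_mul, Complex.conj_ofReal]
        push_cast
        ring_nf
    _ ≤ ‖1 - hip w ξ‖ + (1 - r) * ‖hip w ξ‖ := by
        grw [norm_add_le, norm_mul, Complex.norm_real, Real.norm_of_nonneg (by linarith)]
    _ < δ + (1 - r) := by nlinarith

variable (hξ : ‖ξ‖ = 1) (hr0 : 0 < r) (hr1 : r < 1) (hw : w ∈ Cset ξ (1 - r))
include hξ hr0 hr1 hw

lemma hip_smul_ne_one : hip (r • ξ) w ≠ 1 := by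
  intro h
  have := norm_hip_le w (r • ξ)
  rw [h, norm_one, norm_smul, hξ, Real.norm_of_nonneg hr0.le] at this
  nlinarith [mem_ball_zero_iff.1 hw.1, norm_nonneg w]

lemma phi_smul_ne_zero : phi w (r • ξ) ≠ 0 := by
  refine phi_ne_zero w (r • ξ) (mem_ball_zero_iff.1 hw.1) (hip_smul_ne_one hξ hr0 hr1 hw) ?_
  rintro rfl
  have hself : hip (r • ξ) ξ = r := by
    rw [hip_smul_left, hip_eq_inner, inner_self_eq_norm_sq_to_K, hξ]
    simp
  have := hw.2
  rw [hself, ← Complex.ofReal_one, ← Complex.ofReal_sub, Complex.norm_real,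
    Real.norm_of_nonneg (by linarith)] at this
  exact lt_irrefl _ this

lemma div_le_one_sub_norm_phi_smul_sq :
    (1 - ‖w‖) / (4 * (1 - r)) ≤ 1 - ‖phi w (r • ξ)‖ ^ 2 := by
  have hw1 := mem_ball_zero_iff.1 hw.1
  have hN := norm_one_sub_hip_smul_lt hξ.le hr1.le hw
  have hid := one_sub_norm_phi_sq_mul w (r • ξ) hw1.le (hip_smul_ne_one hξ hr0 hr1 hw)
  rw [norm_smul, hξ, Real.norm_of_nonneg hr0.le, mul_one] at hid
  set N := ‖1 - hip (r • ξ) w‖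
  set ρ := ‖phi w (r • ξ)‖
  have hpos : 0 < 1 - ρ ^ 2 := by
    by_contra! h
    nlinarith [mul_nonpos_of_nonpos_of_nonneg (sub_nonpos.2 h) (sq_nonneg N),
      mul_pos (show 0 < 1 - r ^ 2 by nlinarith) (show 0 < 1 - ‖w‖ ^ 2 by nlinarith [norm_nonneg w])]
  have hN2 : N ^ 2 ≤ (2 * (1 - r)) ^ 2 := pow_le_pow_left₀ (norm_nonneg _) (by linarith) 2
  rw [div_le_iff₀ (by linarith)]
  refine le_of_mul_le_mul_right ?_ (sub_pos.2 hr1)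
  calc (1 - ‖w‖) * (1 - r) ≤ (1 - r ^ 2) * (1 - ‖w‖ ^ 2) := by
        nlinarith [mul_nonneg (mul_nonneg (sub_nonneg.2 hr1.le) (sub_nonneg.2 hw1.le))
          (by positivity : 0 ≤ r + ‖w‖ + r * ‖w‖)]
    _ = (1 - ρ ^ 2) * N ^ 2 := hid.symm
    _ ≤ (1 - ρ ^ 2) * (2 * (1 - r)) ^ 2 := by gcongr
    _ = (1 - ρ ^ 2) * (4 * (1 - r)) * (1 - r) := by ring

lemma Gker_smul_ge (hn : n ≠ 0) :
    ((n : ℝ) + 1) / (4 ^ (n + 1) * n ^ 2) / (1 - r) ^ n * (1 - ‖w‖) ^ n ≤ Gker (r • ξ) w := by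
  have hn' : (n : ℝ) ≠ 0 := Nat.cast_ne_zero.2 hn
  have hr' : 1 - r ≠ 0 := (sub_pos.2 hr1).ne'
  have hfrac_nonneg : 0 ≤ (1 - ‖w‖) / (4 * (1 - r)) :=
    div_nonneg (by linarith [mem_ball_zero_iff.1 hw.1]) (by linarith)
  have hfrac := div_le_one_sub_norm_phi_smul_sq hξ hr0 hr1 hw
  calc ((n : ℝ) + 1) / (4 ^ (n + 1) * n ^ 2) / (1 - r) ^ n * (1 - ‖w‖) ^ n
      = ((n : ℝ) + 1) / (4 * n ^ 2) * ((1 - ‖w‖) / (4 * (1 - r))) ^ n := by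
        rw [div_pow, mul_pow, pow_succ]
        field_simp
    _ ≤ ((n : ℝ) + 1) / (4 * n ^ 2) * (1 - ‖phi w (r • ξ)‖ ^ 2) ^ n := by gcongr
    _ ≤ Gker (r • ξ) w := by
        refine gfun_ge hn (norm_pos_iff.2 (phi_smul_ne_zero hξ hr0 hr1 hw)) ?_
        nlinarith [norm_nonneg (phi w (r • ξ))]

end KoranyiRegion

lemma isOpen_Cset {n : ℕ} (ξ : EuclideanSpace ℂ (Fin n)) (δ : ℝ) : IsOpen (Cset ξ δ) :=
  isOpen_ball.inter <|
    isOpen_lt (continuous_const.sub (continuous_hip_left ξ)).norm continuous_const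

theorem statement11_general (n : ℕ) (hn : 1 ≤ n)
    (μ : Measure (EuclideanSpace ℂ (Fin n)))
    (r : ℝ) (hr0 : 0 < r) (hr1 : r < 1)
    (ξ : EuclideanSpace ℂ (Fin n)) (hξ : ‖ξ‖ = 1) :
    ENNReal.ofReal (((n : ℝ) + 1) / (4 ^ (n + 1) * (n : ℝ) ^ 2) / (1 - r) ^ n) *
        lamRM μ (Cset ξ (1 - r))
      ≤ Gpot μ (r • ξ) := by
  set c := ((n : ℝ) + 1) / (4 ^ (n + 1) * (n : ℝ) ^ 2) / (1 - r) ^ n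
  have hc : 0 ≤ c := div_nonneg (by positivity) (pow_nonneg (by linarith) n)
  calc ENNReal.ofReal c * lamRM μ (Cset ξ (1 - r))
      = ∫⁻ w in Cset ξ (1 - r), ENNReal.ofReal (c * (1 - ‖w‖) ^ n) ∂μ := by
        simp_rw [lamRM, ← lintegral_const_mul' _ _ ENNReal.ofReal_ne_top, ENNReal.ofReal_mul hc]
    _ ≤ ∫⁻ w in Cset ξ (1 - r), ENNReal.ofReal (Gker (r • ξ) w) ∂μ :=
        setLIntegral_mono' (isOpen_Cset ξ _).measurableSet fun w hw =>
          ENNReal.ofReal_le_ofReal (Gker_smul_ge hξ hr0 hr1 hw (by omega))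
    _ ≤ Gpot μ (r • ξ) := lintegral_mono_set fun w hw => hw.1

/-- Lower estimate for the Green potential:
`G_μ(rξ) ≥ ((n+1)/(4^{n+1} n²)) · λ(C(ξ,1-r))/(1-r)^n`. -/
theorem statement11 (n : ℕ) (hn : 1 ≤ n)
    (μ : Measure (EuclideanSpace ℂ (Fin n)))
    (hμ : ∫⁻ w in ball (0 : EuclideanSpace ℂ (Fin n)) 1,
        ENNReal.ofReal ((1 - ‖w‖ ^ 2) ^ n) ∂μ < ⊤)
    (r : ℝ) (hr0 : 0 < r) (hr1 : r < 1)
    (ξ : EuclideanSpace ℂ (Fin n)) (hξ : ‖ξ‖ = 1) :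
    ENNReal.ofReal (((n : ℝ) + 1) / (4 ^ (n + 1) * (n : ℝ) ^ 2) / (1 - r) ^ n) *
        lamRM μ (Cset ξ (1 - r))
      ≤ Gpot μ (r • ξ) :=
  statement11_general n hn μ r hr0 hr1 ξ hξ
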